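/- Let U ∈ U(n) and U' ∈ U(n), and suppose the unitary matrix δ = U·U'† has eigenvalue decomposition δ = U₁·D²·U₁† with U₁ unitary and D² diagonal unitary. Choose a diagonal unitary square root D of D² and set U₂ = D·U₁†·U'. Then (U₁ ⊕ U₁)·(D ⊕ D†)·(U₂ ⊕ U₂) = U ⊕ U', i.e., U₁DU₂ = U and U₁D†U₂ = U'. -/
import Mathlib


open Matrix

/-- Numerical type-A KAK decomposition: if `δ = U·U'ᴴ = U₁·D²·U₁ᴴ` with `U, U', U₁`
unitary and `D = diagonal d` a diagonal unitary square root of `D²`, then with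
`U₂ = D·U₁ᴴ·U'` one has `U₁·D·U₂ = U` and `U₁·Dᴴ·U₂ = U'`, i.e.
`(U₁ ⊕ U₁)·(D ⊕ Dᴴ)·(U₂ ⊕ U₂) = U ⊕ U'`. -/
theorem stmt_19 (n : ℕ) (U U' U₁ : Matrix (Fin n) (Fin n) ℂ)
    (hU : Uᴴ * U = 1 ∧ U * Uᴴ = 1)
    (hU' : U'ᴴ * U' = 1 ∧ U' * U'ᴴ = 1)
    (hU₁ : U₁ᴴ * U₁ = 1 ∧ U₁ * U₁ᴴ = 1)
    (d : Fin n → ℂ) (hd : ∀ i, star (d i) * d i = 1)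
    (hδ : U * U'ᴴ = U₁ * Matrix.diagonal (fun i => d i ^ 2) * U₁ᴴ) :
    U₁ * Matrix.diagonal d * (Matrix.diagonal d * U₁ᴴ * U') = U ∧
    U₁ * (Matrix.diagonal d)ᴴ * (Matrix.diagonal d * U₁ᴴ * U') = U' := by
  have hDD : Matrix.diagonal d * Matrix.diagonal d
      = Matrix.diagonal (fun i => d i ^ 2) := by
    rw [Matrix.diagonal_mul_diagonal]
    congr 1; funext i; ring
  have hDHD : (Matrix.diagonal d)ᴴ * Matrix.diagonal d = 1 := by
    rw [Matrix.diagonal_conjTranspose, Matrix.diagonal_mul_diagonal]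
    have h1 : (fun i => star d i * d i) = fun _ => (1 : ℂ) := funext fun i => hd i
    rw [h1]
    exact Matrix.diagonal_one
  constructor
  · calc U₁ * Matrix.diagonal d * (Matrix.diagonal d * U₁ᴴ * U')
        = U₁ * Matrix.diagonal (fun i => d i ^ 2) * U₁ᴴ * U' := by
          rw [← hDD]; noncomm_ring
      _ = U * U'ᴴ * U' := by rw [hδ]
      _ = U := by rw [mul_assoc, hU'.1, mul_one]
  · calc U₁ * (Matrix.diagonal d)ᴴ * (Matrix.diagonal d * U₁ᴴ * U')
        = U₁ * ((Matrix.diagonal d)ᴴ * Matrix.diagonal d) * U₁ᴴ * U' := by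
          noncomm_ring
      _ = U' := by rw [hDHD, mul_one, hU₁.2, one_mul]
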